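/- arXiv:1706.03807 — 2 statements merged into one kernel-verified Lean document; each statement's English description precedes it below -/
import Mathlib

section
/- Let R̂^0 ∈ ℝ^𝓔 and define R̂^s := (2 − 1/δ)𝟏 + K̂(δ,Γ) R̂^{s−1} for s ≥ 1. For each s ≥ 0 define node vectors R^s, Q^s ∈ ℝ^V by R^s_v := 1 + δ·Σ_{w∈N(v)} Γ_{wv} R̂^s_{wv} and Q^s_v := 1 − δ·Σ_{w∈N(v)} Γ_{vw} R̂^s_{vw}. Then for every s ≥ 1 the stacked vector satisfies (R^s, Q^s)ᵀ = K(δ,Γ) (R^{s−1}, Q^{s−1})ᵀ. -/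
open Finset

/-- The matrix `K̂(δ,Γ)` on directed edges, written as a kernel on ordered pairs
of vertices. For `e = (w,v)` and `f = (z,u)`:
`δΓ_{zw}` if `u = w, z ∈ N(w)\{v}`; `δ(Γ_{vw}−1)` if `u = w, z = v`;
`(δ−1)Γ_{zv}` if `u = v, z ∈ N(v)\{w}`; `(δ−1)(Γ_{wv}−1)` if `u = v, z = w`;
`0` otherwise. -/
def Khat {V : Type*} (G : SimpleGraph V) [DecidableRel G.Adj] [DecidableEq V]
    (δ : ℝ) (Γ : Matrix V V ℝ) (e f : V × V) : ℝ :=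
  if f.2 = e.1 ∧ G.Adj f.1 e.1 ∧ f.1 ≠ e.2 then δ * Γ f.1 e.1
  else if f.2 = e.1 ∧ f.1 = e.2 then δ * (Γ e.2 e.1 - 1)
  else if f.2 = e.2 ∧ G.Adj f.1 e.2 ∧ f.1 ≠ e.1 then (δ - 1) * Γ f.1 e.2
  else if f.2 = e.2 ∧ f.1 = e.1 then (δ - 1) * (Γ e.1 e.2 - 1)
  else 0

/-- The affine iteration `x^s = h + K̂ x^{s-1}` on vectors indexed by the
directed edges `𝓔` of `G` (the sum ranges over directed edges only, so entries
at non-edge pairs are irrelevant). -/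
noncomputable def msIter {V : Type*} [Fintype V] [DecidableEq V]
    (G : SimpleGraph V) [DecidableRel G.Adj]
    (h : V × V → ℝ) (Kh : V × V → V × V → ℝ) (x0 : V × V → ℝ) : ℕ → V × V → ℝ
  | 0 => x0
  | s + 1 => fun e =>
      h e + ∑ f ∈ Finset.univ.filter (fun p : V × V => G.Adj p.1 p.2),
        Kh e f * msIter G h Kh x0 s f


/-- The block matrix `K(δ,Γ)` on `V ⊕ V`:
`[[(1−δ)I − (1−δ)diag(Γ𝟏) + δΓ, δI], [δI − δ·diag(Γ𝟏) + (1−δ)Γ, (1−δ)I]]`,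
where `(Γ𝟏)_v = Σ_{w∈N(v)} Γ_{vw}`. -/
noncomputable def Kblock {V : Type*} [Fintype V] [DecidableEq V]
    (G : SimpleGraph V) [DecidableRel G.Adj]
    (δ : ℝ) (Γ : Matrix V V ℝ) : Matrix (V ⊕ V) (V ⊕ V) ℝ :=
  Matrix.fromBlocks
    ((1 - δ) • (1 : Matrix V V ℝ)
      - (1 - δ) • Matrix.diagonal (fun v => ∑ w ∈ G.neighborFinset v, Γ v w) + δ • Γ)
    (δ • (1 : Matrix V V ℝ))
    (δ • (1 : Matrix V V ℝ)
      - δ • Matrix.diagonal (fun v => ∑ w ∈ G.neighborFinset v, Γ v w) + (1 - δ) • Γ)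
    ((1 - δ) • (1 : Matrix V V ℝ))


open Finset

set_option linter.unusedSectionVars false
section Aux

variable {V : Type*} [Fintype V] [DecidableEq V]
  (G : SimpleGraph V) [DecidableRel G.Adj]
  (δ : ℝ) (Γ : Matrix V V ℝ)

lemma khat_mul (hΓ0 : ∀ v w, ¬ G.Adj v w → Γ v w = 0)
    {w v : V} (hadj : G.Adj w v) (x : V × V → ℝ) (z u : V) :
    Khat G δ Γ (w, v) (z, u) * x (z, u) =
      (if u = w then δ * Γ z w * x (z, w) + (if z = v then -(δ * x (v, w)) else 0) else 0)
      + (if u = v then (δ - 1) * Γ z v * x (z, v)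
          + (if z = w then -((δ - 1) * x (w, v)) else 0) else 0) := by
  have hwv : w ≠ v := hadj.ne
  unfold Khat
  by_cases huw : u = w <;> by_cases huv : u = v <;>
    by_cases hzv : z = v <;> by_cases hzw : z = w <;>
    by_cases h1 : G.Adj z w <;> by_cases h2 : G.Adj z v <;>
    simp_all [hΓ0] <;> ring

lemma sum_khat (hΓ0 : ∀ v w, ¬ G.Adj v w → Γ v w = 0)
    {w v : V} (hadj : G.Adj w v) (x : V × V → ℝ) :
    ∑ f ∈ Finset.univ.filter (fun p : V × V => G.Adj p.1 p.2),
        Khat G δ Γ (w, v) f * x f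
    = (δ * ∑ z ∈ G.neighborFinset w, Γ z w * x (z, w) - δ * x (v, w))
      + ((δ - 1) * ∑ z ∈ G.neighborFinset v, Γ z v * x (z, v) - (δ - 1) * x (w, v)) := by
  have hzero : ∀ f ∈ (Finset.univ : Finset (V × V)),
      f ∉ Finset.univ.filter (fun p : V × V => G.Adj p.1 p.2) →
      Khat G δ Γ (w, v) f * x f = 0 := by
    intro f _ hf
    simp only [Finset.mem_filter, Finset.mem_univ, true_and] at hf
    obtain ⟨z, u⟩ := f
    simp only at hf
    rw [khat_mul G δ Γ hΓ0 hadj x z u]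
    have hvw := hadj.symm
    by_cases huw : u = w <;> by_cases huv : u = v <;>
      by_cases hz1 : z = v <;> by_cases hz2 : z = w <;> simp_all [hΓ0]
  rw [Finset.sum_subset (Finset.filter_subset _ _) hzero]
  rw [show (Finset.univ : Finset (V × V)) = Finset.univ ×ˢ Finset.univ by rfl]
  rw [Finset.sum_product]
  have key : ∀ z : V, ∑ u : V, Khat G δ Γ (w, v) (z, u) * x (z, u)
      = (δ * Γ z w * x (z, w) + (if z = v then -(δ * x (v, w)) else 0))
        + ((δ - 1) * Γ z v * x (z, v) + (if z = w then -((δ - 1) * x (w, v)) else 0)) := by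
    intro z
    simp only [khat_mul G δ Γ hΓ0 hadj x z]
    rw [Finset.sum_add_distrib, Finset.sum_ite_eq' Finset.univ w, Finset.sum_ite_eq' Finset.univ v]
    simp
  simp only [key]
  rw [Finset.sum_add_distrib, Finset.sum_add_distrib, Finset.sum_add_distrib,
    Finset.sum_ite_eq' Finset.univ v, Finset.sum_ite_eq' Finset.univ w]
  have hw : ∑ z : V, δ * Γ z w * x (z, w) = δ * ∑ z ∈ G.neighborFinset w, Γ z w * x (z, w) := by
    rw [Finset.mul_sum, ← Finset.sum_subset (Finset.subset_univ (G.neighborFinset w))]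
    · exact Finset.sum_congr rfl (fun z _ => by ring)
    · intro z _ hz
      rw [SimpleGraph.mem_neighborFinset] at hz
      rw [hΓ0 z w (fun h => hz h.symm)]; ring
  have hv : ∑ z : V, (δ - 1) * Γ z v * x (z, v)
      = (δ - 1) * ∑ z ∈ G.neighborFinset v, Γ z v * x (z, v) := by
    rw [Finset.mul_sum, ← Finset.sum_subset (Finset.subset_univ (G.neighborFinset v))]
    · exact Finset.sum_congr rfl (fun z _ => by ring)
    · intro z _ hz
      rw [SimpleGraph.mem_neighborFinset] at hz
      rw [hΓ0 z v (fun h => hz h.symm)]; ring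
  rw [hw, hv]
  simp
  ring

end Aux

section Aux2

set_option linter.unusedSectionVars false

variable {V : Type*} [Fintype V] [DecidableEq V]
  (G : SimpleGraph V) [DecidableRel G.Adj]
  (δ : ℝ) (Γ : Matrix V V ℝ)

lemma rhat_step (hΓ0 : ∀ v w, ¬ G.Adj v w → Γ v w = 0)
    (Rhat0 : V × V → ℝ) (Rhat : ℕ → V × V → ℝ)
    (hRhat : Rhat = msIter G (fun _ => 2 - 1 / δ) (Khat G δ Γ) Rhat0)
    {w v : V} (hadj : G.Adj w v) (s : ℕ) :
    Rhat (s + 1) (w, v) = (2 - 1 / δ)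
      + ((δ * ∑ z ∈ G.neighborFinset w, Γ z w * Rhat s (z, w) - δ * Rhat s (v, w))
        + ((δ - 1) * ∑ z ∈ G.neighborFinset v, Γ z v * Rhat s (z, v)
          - (δ - 1) * Rhat s (w, v))) := by
  conv_lhs => rw [hRhat]
  simp only [msIter]
  rw [← hRhat, sum_khat G δ Γ hΓ0 hadj]

end Aux2
/-- if `R̂^s = (2 − 1/δ)𝟏 + K̂(δ,Γ) R̂^{s−1}` on directed edges, then
the node vectors `R^s_v := 1 + δ Σ_{w∈N(v)} Γ_{wv} R̂^s_{wv}` and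
`Q^s_v := 1 − δ Σ_{w∈N(v)} Γ_{vw} R̂^s_{vw}` satisfy
`(R^s, Q^s)ᵀ = K(δ,Γ) (R^{s−1}, Q^{s−1})ᵀ` for every `s ≥ 1`. -/
theorem stmt_2 {V : Type*} [Fintype V] [DecidableEq V]
    (G : SimpleGraph V) [DecidableRel G.Adj]
    (δ : ℝ) (hδ : δ ≠ 0) (Γ : Matrix V V ℝ) (hΓsym : Γ.IsSymm)
    (hΓ0 : ∀ v w, ¬ G.Adj v w → Γ v w = 0)
    (Rhat0 : V × V → ℝ)
    (Rhat : ℕ → V × V → ℝ)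
    (hRhat : Rhat = msIter G (fun _ => 2 - 1 / δ) (Khat G δ Γ) Rhat0)
    (R Q : ℕ → V → ℝ)
    (hR : ∀ s v, R s v = 1 + δ * ∑ w ∈ G.neighborFinset v, Γ w v * Rhat s (w, v))
    (hQ : ∀ s v, Q s v = 1 - δ * ∑ w ∈ G.neighborFinset v, Γ v w * Rhat s (v, w)) :
    ∀ s : ℕ, 1 ≤ s →
      Sum.elim (R s) (Q s) =
        (Kblock G δ Γ).mulVec (Sum.elim (R (s - 1)) (Q (s - 1))) := by
  intro s hs
  obtain ⟨t, rfl⟩ : ∃ t, s = t + 1 := ⟨s - 1, (Nat.succ_pred_eq_of_pos hs).symm⟩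
  simp only [Nat.add_sub_cancel]
  have hsym : ∀ a b : V, Γ a b = Γ b a := fun a b => hΓsym.apply b a
  funext x
  rw [Kblock, Matrix.fromBlocks_mulVec]
  cases x with
  | inl v =>
    simp only [Sum.elim_inl, Sum.elim_comp_inl, Sum.elim_comp_inr, Pi.add_apply,
      Matrix.sub_mulVec, Matrix.add_mulVec, Matrix.smul_mulVec, Matrix.one_mulVec,
      Pi.sub_apply, Pi.smul_apply, smul_eq_mul, Matrix.mulVec_diagonal]
    have hS : Γ.mulVec (R t) v = ∑ w ∈ G.neighborFinset v, Γ w v * R t w := by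
      rw [Matrix.mulVec, dotProduct,
        ← Finset.sum_subset (Finset.subset_univ (G.neighborFinset v))]
      · exact Finset.sum_congr rfl fun w _ => by rw [hsym w v]
      · intro z _ hz
        rw [SimpleGraph.mem_neighborFinset] at hz
        rw [hΓ0 v z hz]; ring
    rw [hS, hR]
    have hbig : δ * ∑ w ∈ G.neighborFinset v, Γ w v * Rhat (t + 1) (w, v)
        = δ * (∑ w ∈ G.neighborFinset v, Γ w v * R t w)
          + (δ - 1) * R t v * (∑ w ∈ G.neighborFinset v, Γ v w)
          - δ ^ 2 * (∑ w ∈ G.neighborFinset v, Γ w v * Rhat t (v, w))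
          - δ * (δ - 1) * (∑ w ∈ G.neighborFinset v, Γ w v * Rhat t (w, v)) := by
      have hterm : ∀ w ∈ G.neighborFinset v, δ * (Γ w v * Rhat (t + 1) (w, v)) =
          δ * (Γ w v * R t w) + (δ - 1) * R t v * Γ v w
            - δ ^ 2 * (Γ w v * Rhat t (v, w)) - δ * (δ - 1) * (Γ w v * Rhat t (w, v)) := by
        intro w hw
        rw [SimpleGraph.mem_neighborFinset] at hw
        rw [rhat_step G δ Γ hΓ0 Rhat0 Rhat hRhat hw.symm, hsym v w]
        simp only [hR]
        field_simp
        ring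
      rw [Finset.mul_sum, Finset.sum_congr rfl hterm]
      simp only [Finset.sum_sub_distrib, Finset.sum_add_distrib, Finset.mul_sum]
    have hX : δ * ∑ w ∈ G.neighborFinset v, Γ w v * Rhat t (v, w) = 1 - Q t v := by
      rw [hQ]
      rw [show ∑ w ∈ G.neighborFinset v, Γ w v * Rhat t (v, w)
        = ∑ w ∈ G.neighborFinset v, Γ v w * Rhat t (v, w) from
        Finset.sum_congr rfl fun w _ => by rw [hsym w v]]
      ring
    have hY : δ * ∑ w ∈ G.neighborFinset v, Γ w v * Rhat t (w, v) = R t v - 1 := by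
      rw [hR]; ring
    linear_combination hbig - δ * hX - (δ - 1) * hY
  | inr v =>
    simp only [Sum.elim_inr, Sum.elim_comp_inl, Sum.elim_comp_inr, Pi.add_apply,
      Matrix.sub_mulVec, Matrix.add_mulVec, Matrix.smul_mulVec, Matrix.one_mulVec,
      Pi.sub_apply, Pi.smul_apply, smul_eq_mul, Matrix.mulVec_diagonal]
    have hS : Γ.mulVec (R t) v = ∑ w ∈ G.neighborFinset v, Γ v w * R t w := by
      rw [Matrix.mulVec, dotProduct,
        ← Finset.sum_subset (Finset.subset_univ (G.neighborFinset v))]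
      · intro z _ hz
        rw [SimpleGraph.mem_neighborFinset] at hz
        rw [hΓ0 v z hz]; ring
    rw [hS, hQ]
    have hbig : δ * ∑ w ∈ G.neighborFinset v, Γ v w * Rhat (t + 1) (v, w)
        = δ * R t v * (∑ w ∈ G.neighborFinset v, Γ v w)
          + (δ - 1) * (∑ w ∈ G.neighborFinset v, Γ v w * R t w)
          - δ ^ 2 * (∑ w ∈ G.neighborFinset v, Γ v w * Rhat t (w, v))
          - δ * (δ - 1) * (∑ w ∈ G.neighborFinset v, Γ v w * Rhat t (v, w)) := by
      have hterm : ∀ w ∈ G.neighborFinset v, δ * (Γ v w * Rhat (t + 1) (v, w)) =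
          δ * R t v * Γ v w + (δ - 1) * (Γ v w * R t w)
            - δ ^ 2 * (Γ v w * Rhat t (w, v)) - δ * (δ - 1) * (Γ v w * Rhat t (v, w)) := by
        intro w hw
        rw [SimpleGraph.mem_neighborFinset] at hw
        rw [rhat_step G δ Γ hΓ0 Rhat0 Rhat hRhat hw]
        simp only [hR]
        field_simp
        ring
      rw [Finset.mul_sum, Finset.sum_congr rfl hterm]
      simp only [Finset.sum_sub_distrib, Finset.sum_add_distrib, Finset.mul_sum]
    have hX : δ * ∑ w ∈ G.neighborFinset v, Γ v w * Rhat t (w, v) = R t v - 1 := by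
      rw [hR]
      rw [show ∑ w ∈ G.neighborFinset v, Γ v w * Rhat t (w, v)
        = ∑ w ∈ G.neighborFinset v, Γ w v * Rhat t (w, v) from
        Finset.sum_congr rfl fun w _ => by rw [hsym v w]]
      ring
    have hY : δ * ∑ w ∈ G.neighborFinset v, Γ v w * Rhat t (v, w) = 1 - Q t v := by
      rw [hQ]; ring
    linear_combination -hbig + δ * hX + (δ - 1) * hY
end

section
/- Let b ∈ ℝ^n with 0 < b_v < 1 for every v. Define (r^t, q^t)ᵀ := K^t (b, b)ᵀ and (r^∞, q^∞)ᵀ := K^∞ (b, b)ᵀ. Then for every t ≥ 1, ‖r^t − r^∞‖ ≤ ‖(K − K^∞)^t‖ · (2/(2−γ)) · √(2n), where ‖·‖ denotes the Euclidean norm for vectors and the ℓ2 operator norm for matrices. -/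
open Finset

/-- The Euclidean (ℓ2) norm of a vector indexed by a finite type. -/
noncomputable def evnorm {ι : Type*} [Fintype ι] (x : ι → ℝ) : ℝ :=
  Real.sqrt (∑ i, x i ^ 2)

/-- The ℓ2 operator norm of a square real matrix. -/
noncomputable def l2opNorm {ι : Type*} [Fintype ι] [DecidableEq ι]
    (M : Matrix ι ι ℝ) : ℝ :=
  ‖Matrix.toEuclideanCLM (𝕜 := ℝ) M‖

lemma evnorm_eq {ι : Type*} [Fintype ι] (x : ι → ℝ) :
    evnorm x = ‖(WithLp.equiv 2 (ι → ℝ)).symm x‖ := by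
  rw [evnorm, EuclideanSpace.norm_eq]
  exact congrArg _ (Finset.sum_congr rfl fun i _ => by
    simp [Real.norm_eq_abs, sq_abs])

lemma mulVec_evnorm_le {ι : Type*} [Fintype ι] [DecidableEq ι]
    (M : Matrix ι ι ℝ) (x : ι → ℝ) :
    evnorm (M.mulVec x) ≤ l2opNorm M * evnorm x := by
  rw [evnorm_eq, evnorm_eq]
  have h : (WithLp.equiv 2 (ι → ℝ)).symm (M.mulVec x)
      = Matrix.toEuclideanCLM (𝕜 := ℝ) M ((WithLp.equiv 2 (ι → ℝ)).symm x) := by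
    rfl
  rw [h]
  exact (Matrix.toEuclideanCLM (𝕜 := ℝ) M).le_opNorm _

/-- with `0 < b_v < 1`, `(r^t, q^t) := K^t (b,b)` and
`(r^∞, q^∞) := K^∞ (b,b)`, for every `t ≥ 1`,
`‖r^t − r^∞‖ ≤ ‖(K − K^∞)^t‖ · (2/(2−γ)) · √(2n)`. -/
theorem stmt_10 (n : ℕ) (hn : 1 ≤ n) (W : Matrix (Fin n) (Fin n) ℝ)
    (hWsym : W.IsSymm) (hW1 : W.mulVec 1 = 1) (γ : ℝ) (hγ0 : 0 ≤ γ) (hγ2 : γ < 2)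
    (J : Matrix (Fin n) (Fin n) ℝ) (hJ : J = Matrix.of fun _ _ => (1 : ℝ))
    (K Kinf : Matrix (Fin n ⊕ Fin n) (Fin n ⊕ Fin n) ℝ)
    (hK : K = Matrix.fromBlocks (γ • W) 1 ((1 - γ) • (1 : Matrix (Fin n) (Fin n) ℝ)) 0)
    (hKinf : Kinf = ((2 - γ) * (n : ℝ))⁻¹ •
      Matrix.fromBlocks J J ((1 - γ) • J) ((1 - γ) • J))
    (b : Fin n → ℝ) (hb : ∀ v, 0 < b v ∧ b v < 1)
    (r : ℕ → Fin n → ℝ)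
    (hr : ∀ t v, r t v = (K ^ t).mulVec (Sum.elim b b) (Sum.inl v))
    (rinf : Fin n → ℝ)
    (hrinf : ∀ v, rinf v = Kinf.mulVec (Sum.elim b b) (Sum.inl v)) :
    ∀ t : ℕ, 1 ≤ t →
      evnorm (fun v => r t v - rinf v) ≤
        l2opNorm ((K - Kinf) ^ t) * (2 / (2 - γ)) * Real.sqrt (2 * n) := by
  have hγ2' : (0:ℝ) < 2 - γ := by linarith
  have hn0 : (0:ℝ) < n := by exact_mod_cast hn
  -- row sums of W are 1
  have hWrow : ∀ i, ∑ k, W i k = 1 := by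
    intro i
    have := congrFun hW1 i
    simpa [Matrix.mulVec, dotProduct] using this
  have hWcol : ∀ j, ∑ k, W k j = 1 := by
    intro j
    calc ∑ k, W k j = ∑ k, W j k := Finset.sum_congr rfl fun k _ => hWsym.apply j k
      _ = 1 := hWrow j
  have hWJ : W * J = J := by
    ext i j; simp [Matrix.mul_apply, hJ, hWrow i]
  have hJW : J * W = J := by
    ext i j; simp [Matrix.mul_apply, hJ, hWcol j]
  have hJJ : J * J = (n : ℝ) • J := by
    ext i j; simp [Matrix.mul_apply, hJ]
  set F := Matrix.fromBlocks J J ((1 - γ) • J) ((1 - γ) • J) with hF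
  have hKF : K * F = F := by
    rw [hK, hF, Matrix.fromBlocks_multiply]
    simp only [Matrix.smul_mul, hWJ, Matrix.one_mul, Matrix.zero_mul, Matrix.mul_zero,
      add_zero, zero_add]
    have h1 : γ • J + (1 - γ) • J = J := by module
    rw [h1]
  have hFK : F * K = F := by
    rw [hK, hF, Matrix.fromBlocks_multiply]
    simp only [Matrix.smul_mul, Matrix.mul_smul, hJW, Matrix.one_mul, Matrix.mul_one,
      Matrix.zero_mul, Matrix.mul_zero, add_zero, zero_add]
    rw [Matrix.fromBlocks_inj]
    refine ⟨?_, ?_, ?_, ?_⟩ <;> module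
  have hFF : F * F = ((2 - γ) * (n : ℝ)) • F := by
    rw [hF, Matrix.fromBlocks_multiply, Matrix.fromBlocks_smul]
    simp only [Matrix.smul_mul, Matrix.mul_smul, hJJ]
    rw [Matrix.fromBlocks_inj]
    refine ⟨?_, ?_, ?_, ?_⟩ <;> module
  have hc : ((2 - γ) * (n : ℝ)) ≠ 0 := by positivity
  have hKKinf : K * Kinf = Kinf := by rw [hKinf, Matrix.mul_smul, hKF]
  have hKinfK : Kinf * K = Kinf := by rw [hKinf, Matrix.smul_mul, hFK]
  have hKinf2 : Kinf * Kinf = Kinf := by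
    rw [hKinf, Matrix.smul_mul, Matrix.mul_smul, hFF, smul_smul, smul_smul,
      mul_assoc, inv_mul_cancel₀ hc, mul_one]
  have hKtKinf : ∀ t : ℕ, K ^ t * Kinf = Kinf := by
    intro t
    induction t with
    | zero => simp
    | succ t ih => rw [pow_succ, mul_assoc, hKKinf, ih]
  have hKt : ∀ t : ℕ, 1 ≤ t → (K - Kinf) ^ t = K ^ t - Kinf := by
    intro t ht
    induction t with
    | zero => omega
    | succ t ih =>
      rcases Nat.eq_or_lt_of_le ht with h | h
      · simp [← h]
      · have ht' : 1 ≤ t := by omega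
        rw [pow_succ, ih ht', sub_mul, mul_sub, mul_sub, hKtKinf, hKinfK, hKinf2,
          ← pow_succ]
        abel
  intro t ht
  set x : Fin n ⊕ Fin n → ℝ := Sum.elim b b with hx
  set M := (K - Kinf) ^ t with hM
  have hdiff : ∀ v, r t v - rinf v = M.mulVec x (Sum.inl v) := by
    intro v
    rw [hr, hrinf, hM, hKt t ht, Matrix.sub_mulVec]
    rfl
  have h1 : evnorm (fun v => r t v - rinf v) ≤ evnorm (M.mulVec x) := by
    apply Real.sqrt_le_sqrt
    calc ∑ v : Fin n, (r t v - rinf v) ^ 2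
        = ∑ v : Fin n, (M.mulVec x (Sum.inl v)) ^ 2 :=
          Finset.sum_congr rfl fun v _ => by rw [hdiff]
      _ ≤ ∑ i : Fin n ⊕ Fin n, (M.mulVec x i) ^ 2 := by
          rw [Fintype.sum_sum_type]
          have : (0:ℝ) ≤ ∑ v : Fin n, (M.mulVec x (Sum.inr v)) ^ 2 := by positivity
          linarith
  have h2 := mulVec_evnorm_le M x
  have h3 : evnorm x ≤ Real.sqrt (2 * n) := by
    apply Real.sqrt_le_sqrt
    rw [hx, Fintype.sum_sum_type]
    have hb2 : ∀ v, (b v) ^ 2 ≤ 1 := by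
      intro v
      obtain ⟨h0, h1⟩ := hb v
      nlinarith
    have : ∑ v : Fin n, (b v) ^ 2 ≤ n := by
      calc ∑ v : Fin n, (b v) ^ 2 ≤ ∑ _v : Fin n, (1:ℝ) :=
            Finset.sum_le_sum fun v _ => hb2 v
        _ = n := by simp
    simp only [Sum.elim_inl, Sum.elim_inr]
    linarith
  have hop : 0 ≤ l2opNorm M := norm_nonneg _
  have hs : (0:ℝ) ≤ Real.sqrt (2 * n) := Real.sqrt_nonneg _
  have hfac : (1:ℝ) ≤ 2 / (2 - γ) := by
    rw [le_div_iff₀ hγ2']; linarith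
  calc evnorm (fun v => r t v - rinf v)
      ≤ l2opNorm M * evnorm x := le_trans h1 h2
    _ ≤ l2opNorm M * Real.sqrt (2 * n) := by
        apply mul_le_mul_of_nonneg_left h3 hop
    _ ≤ l2opNorm M * (2 / (2 - γ)) * Real.sqrt (2 * n) := by
        rw [mul_assoc]
        apply mul_le_mul_of_nonneg_left _ hop
        exact le_mul_of_one_le_left hs hfac
end
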